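/- Let g(x) = 1 − (1 − x²)⁴ for |x| ≤ 1 and g(x) = 1 otherwise, and consider the planar ODE system q̇ = p, ṗ = −g′(q). Fix 0 ≤ q₀ < q̃₀ and let (q,p) and (q̃,p̃) be the solutions with initial data (q₀, 2) and (q̃₀, 2) respectively. Then q(t) < q̃(t) for all t ≥ 0. -/

import Mathlib

/-!
By conservation of `H`, `p(t)²/2 = 2 + g(q₀) − g(q(t)) ≥ 1`, so both momenta stay positive and
both trajectories move to the right. If `q₀ ≥ 1`, both stay in the flat region `g = 1` and travel
at the same constant speed `2`. If `q₀ < 1`, then `g(q₀) < g(q̃₀)`, so the second trajectory has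
the larger energy, hence the strictly larger momentum wherever the positions coincide. The
comparison principle for such boundaries gives `q ≤ q̃`; a contact point at `t > 0` would then be
a minimum of `q̃ − q`, whose derivative `p̃ − p` is positive there.
-/

open Real Set MeasureTheory Filter Topology

noncomputable section

/-- The potential `g(x) = 1 − (1 − x²)⁴` for `|x| ≤ 1`, and `g(x) = 1` otherwise. -/
def gfun (x : ℝ) : ℝ := if |x| ≤ 1 then 1 - (1 - x ^ 2) ^ 4 else 1

/-- The Hamiltonian `H(x,u) = u²/2 + g(x)` of the example. -/
def Hex (x u : ℝ) : ℝ := u ^ 2 / 2 + gfun x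

/-- `(q,p)` solves the planar ODE system `q̇ = p`, `ṗ = −g′(q)`. -/
def SolvesCE (q p : ℝ → ℝ) : Prop :=
  ∀ t : ℝ, HasDerivAt q (p t) t ∧ HasDerivAt p (-(deriv gfun (q t))) t

lemma gfun_eq_one_of_one_le_abs {x : ℝ} (hx : 1 ≤ |x|) : gfun x = 1 := by
  rcases hx.eq_or_lt with hx | hx
  · have hx2 : x ^ 2 = 1 := by rw [← sq_abs, ← hx, one_pow]
    simp [gfun, ← hx, hx2]
  · simp [gfun, not_le.2 hx]

lemma gfun_nonneg (x : ℝ) : 0 ≤ gfun x := by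
  unfold gfun
  split_ifs with hx
  · have hx2 : x ^ 2 ≤ 1 := sq_le_one_iff_abs_le_one x |>.2 hx
    have : (1 - x ^ 2) ^ 4 ≤ 1 :=
      pow_le_one₀ (by linarith) (by nlinarith : 1 - x ^ 2 ≤ 1)
    linarith
  · exact zero_le_one

lemma gfun_le_one (x : ℝ) : gfun x ≤ 1 := by
  unfold gfun
  split_ifs
  · linarith [show 0 ≤ (1 - x ^ 2) ^ 4 by positivity]
  · exact le_rfl

lemma gfun_lt_gfun {a b : ℝ} (ha : 0 ≤ a) (ha₁ : a < 1) (hab : a < b) : gfun a < gfun b := by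
  have ha' : |a| ≤ 1 := abs_le.2 ⟨by linarith, ha₁.le⟩
  have hpos : 0 < 1 - a ^ 2 := by nlinarith
  rcases le_or_gt b 1 with hb | hb
  · have hb' : |b| ≤ 1 := abs_le.2 ⟨by linarith, hb⟩
    have hb0 : 0 ≤ 1 - b ^ 2 := by nlinarith
    have : (1 - b ^ 2) ^ 4 < (1 - a ^ 2) ^ 4 := pow_lt_pow_left₀ (by nlinarith) hb0 (by norm_num)
    simp only [gfun, if_pos ha', if_pos hb']
    linarith
  · have hb' : 1 ≤ |b| := hb.le.trans (le_abs_self b)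
    rw [gfun_eq_one_of_one_le_abs hb', gfun, if_pos ha']
    linarith [pow_pos hpos 4]

lemma hasDerivAt_gfun (x : ℝ) :
    HasDerivAt gfun (if |x| ≤ 1 then 8 * x * (1 - x ^ 2) ^ 3 else 0) x := by
  set g' := if |x| ≤ 1 then 8 * x * (1 - x ^ 2) ^ 3 else 0 with hg'
  have hin : HasDerivWithinAt gfun g' {y | |y| ≤ 1} x := by
    by_cases hx : |x| ≤ 1
    · have hP : HasDerivAt (fun y : ℝ => 1 - (1 - y ^ 2) ^ 4) g' x := by
        refine ((((hasDerivAt_pow 2 x).const_sub 1).pow 4).const_sub 1).congr_deriv ?_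
        rw [hg', if_pos hx]
        push_cast
        ring
      exact hP.hasDerivWithinAt.congr (fun y hy => if_pos hy) (if_pos hx)
    · refine HasFDerivWithinAt.of_notMem_closure ?_
      rwa [(isClosed_le continuous_abs continuous_const).closure_eq]
  have hout : HasDerivWithinAt gfun g' {y | 1 ≤ |y|} x := by
    by_cases hx : 1 ≤ |x|
    · have hzero : g' = 0 := by
        by_cases hx' : |x| ≤ 1
        · have hx2 : x ^ 2 = 1 := by rw [← sq_abs, le_antisymm hx' hx, one_pow]
          simp [g', hx', hx2]
        · simp [g', hx']
      rw [hzero]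
      exact (hasDerivWithinAt_const x _ 1).congr (fun y hy => gfun_eq_one_of_one_le_abs hy)
        (gfun_eq_one_of_one_le_abs hx)
    · refine HasFDerivWithinAt.of_notMem_closure ?_
      rwa [(isClosed_le continuous_const continuous_abs).closure_eq]
  have hcover : {y : ℝ | |y| ≤ 1} ∪ {y | 1 ≤ |y|} = univ :=
    eq_univ_of_forall fun y => le_total |y| 1
  simpa [hcover] using hin.union hout

lemma differentiable_gfun : Differentiable ℝ gfun := fun x => (hasDerivAt_gfun x).differentiableAt

namespace SolvesCE

variable {q p q' p' : ℝ → ℝ}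

lemma continuous_position (h : SolvesCE q p) : Continuous q :=
  continuous_iff_continuousAt.2 fun t => (h t).1.continuousAt

lemma continuous_momentum (h : SolvesCE q p) : Continuous p :=
  continuous_iff_continuousAt.2 fun t => (h t).2.continuousAt

lemma hex_eq (h : SolvesCE q p) (t s : ℝ) : Hex (q t) (p t) = Hex (q s) (p s) := by
  have hderiv : ∀ u, HasDerivAt (fun u => Hex (q u) (p u)) 0 u := by
    intro u
    have hkin := ((h u).2.pow 2).div_const 2
    have hpot := (differentiable_gfun (q u)).hasDerivAt.comp u (h u).1
    refine (hkin.add hpot).congr_deriv ?_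
    push_cast
    ring
  exact is_const_of_deriv_eq_zero (fun u => (hderiv u).differentiableAt)
    (fun u => (hderiv u).deriv) t s

lemma momentum_ne_zero (h : SolvesCE q p) (hp : 2 < p 0 ^ 2) (t : ℝ) : p t ≠ 0 := by
  intro ht
  have hE := h.hex_eq t 0
  simp only [Hex, ht] at hE
  linarith [gfun_le_one (q t), gfun_nonneg (q 0)]

lemma momentum_pos (h : SolvesCE q p) (hp : 2 < p 0 ^ 2) (hp₀ : 0 < p 0) (t : ℝ) : 0 < p t := by
  by_contra! ht
  obtain ⟨s, hs⟩ := intermediate_value_univ t 0 h.continuous_momentum ⟨ht, hp₀.le⟩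
  exact h.momentum_ne_zero hp s hs

lemma momentum_eq_of_one_le (h : SolvesCE q p) (hp : ∀ t, 0 < p t) (hq : 1 ≤ q 0) {t : ℝ}
    (ht : 0 ≤ t) : p t = p 0 := by
  have hmono : StrictMono q := strictMono_of_hasDerivAt_pos (fun t => (h t).1) hp
  have hqt : 1 ≤ q t := hq.trans (hmono.monotone ht)
  have hE := h.hex_eq t 0
  simp only [Hex, gfun_eq_one_of_one_le_abs (hq.trans (le_abs_self _)),
    gfun_eq_one_of_one_le_abs (hqt.trans (le_abs_self _))] at hE
  exact (pow_left_inj₀ (hp t).le (hp 0).le two_ne_zero).1 (by linarith)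

lemma sub_eq_of_momentum_eq (h : SolvesCE q p) (h' : SolvesCE q' p')
    (hp : ∀ s, 0 ≤ s → p s = p' s) {t : ℝ} (ht : 0 ≤ t) : q' t - q t = q' 0 - q 0 := by
  refine constant_of_has_deriv_right_zero
    (h'.continuous_position.sub h.continuous_position).continuousOn (fun s hs => ?_)
    t ⟨ht, le_rfl⟩
  have hd := (h' s).1.sub (h s).1
  rw [hp s hs.1, sub_self] at hd
  exact hd.hasDerivWithinAt

lemma momentum_lt_of_hex_lt (h : SolvesCE q p) (h' : SolvesCE q' p')
    (hH : Hex (q 0) (p 0) < Hex (q' 0) (p' 0)) {x : ℝ} (hp' : 0 ≤ p' x) (hx : q x = q' x) :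
    p x < p' x := by
  rw [← h.hex_eq x 0, ← h'.hex_eq x 0, Hex, Hex, hx] at hH
  exact lt_of_pow_lt_pow_left₀ 2 hp' (by linarith)

lemma position_le_of_hex_lt (h : SolvesCE q p) (h' : SolvesCE q' p')
    (hH : Hex (q 0) (p 0) < Hex (q' 0) (p' 0)) (hq : q 0 ≤ q' 0) (hp' : ∀ t, 0 ≤ p' t)
    {t : ℝ} (ht : 0 ≤ t) : q t ≤ q' t :=
  image_le_of_deriv_right_lt_deriv_boundary' h.continuous_position.continuousOn
    (fun s _ => (h s).1.hasDerivWithinAt) hq h'.continuous_position.continuousOn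
    (fun s _ => (h' s).1.hasDerivWithinAt)
    (fun s _ hs => h.momentum_lt_of_hex_lt h' hH (hp' s) hs) ⟨ht, le_rfl⟩

lemma position_lt_of_hex_lt (h : SolvesCE q p) (h' : SolvesCE q' p')
    (hH : Hex (q 0) (p 0) < Hex (q' 0) (p' 0)) (hq : q 0 < q' 0) (hp' : ∀ t, 0 ≤ p' t)
    {t : ℝ} (ht : 0 ≤ t) : q t < q' t := by
  refine (h.position_le_of_hex_lt h' hH hq.le hp' ht).lt_of_ne fun heq => ?_
  rcases ht.eq_or_lt with rfl | ht
  · exact hq.ne heq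
  have hmin : IsLocalMin (fun s => q' s - q s) t := by
    filter_upwards [Ici_mem_nhds ht] with s hs
    rw [heq, sub_self, sub_nonneg]
    exact h.position_le_of_hex_lt h' hH hq.le hp' hs
  have hd := hmin.hasDerivAt_eq_zero ((h' t).1.sub (h t).1)
  exact (h.momentum_lt_of_hex_lt h' hH (hp' t) heq).ne' (sub_eq_zero.1 hd)

end SolvesCE

/-- Lemma 5.9: comparison of the trajectories issued from `(q₀, 2)` and `(q̃₀, 2)`
with `0 ≤ q₀ < q̃₀`: they never cross for `t ≥ 0`. -/
theorem stmt_16 (q₀ qt₀ : ℝ) (hq₀ : 0 ≤ q₀) (hlt : q₀ < qt₀)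
    (q p qt pt : ℝ → ℝ) (hsol : SolvesCE q p) (hsolt : SolvesCE qt pt)
    (hq0 : q 0 = q₀) (hp0 : p 0 = 2) (hqt0 : qt 0 = qt₀) (hpt0 : pt 0 = 2) :
    ∀ t : ℝ, 0 ≤ t → q t < qt t := by
  have hp : ∀ t, 0 < p t := hsol.momentum_pos (by norm_num [hp0]) (by norm_num [hp0])
  have hpt : ∀ t, 0 < pt t := hsolt.momentum_pos (by norm_num [hpt0]) (by norm_num [hpt0])
  intro t ht
  rcases le_or_gt 1 q₀ with hq₁ | hq₁
  · have hmom : ∀ s, 0 ≤ s → p s = pt s := fun s hs => by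
      rw [hsol.momentum_eq_of_one_le hp (hq0 ▸ hq₁) hs,
        hsolt.momentum_eq_of_one_le hpt (by linarith) hs, hp0, hpt0]
    linarith [hsol.sub_eq_of_momentum_eq hsolt hmom ht]
  · have hH : Hex (q 0) (p 0) < Hex (qt 0) (pt 0) := by
      simp only [Hex, hq0, hp0, hqt0, hpt0]
      linarith [gfun_lt_gfun hq₀ hq₁ hlt]
    exact hsol.position_lt_of_hex_lt hsolt hH (by linarith) (fun s => (hpt s).le) ht
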